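/- arXiv:1303.0822 — 6 statements merged into one kernel-verified Lean document; each statement's English description precedes it below -/
import Mathlib

section
/- Under the above hypotheses, w is (1−γ, γ)-irregular for every γ ∈ (0,1); that is, sup_{a∈ℝ} sup_{0≤s<t≤T} (1+|a|)^{1−γ} |Φ^w_{s,t}(a)| / |t−s|^γ < ∞. -/
/-!
Integrating by parts against `d/dr e^{i a w_r} = i a w'_r e^{i a w_r}` gives
`|a| |Φ_{s,t}(a)| ≤ 2 / c + ∫_0^T |w'' / w'^2| =: K`, and trivially `|Φ_{s,t}(a)| ≤ t - s`, so
`(1 + |a|) |Φ_{s,t}(a)| ≤ T + K`. Splitting `|Φ| = |Φ|^{1-γ} |Φ|^γ` then gives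
`(1 + |a|)^{1-γ} |Φ_{s,t}(a)| ≤ (T + K)^{1-γ} (t - s)^γ`.
-/

open MeasureTheory Complex Set

lemma norm_cexp_I_mul_ofReal_mul (a x : ℝ) : ‖exp (I * a * x)‖ = 1 := by
  simp [Complex.norm_exp]

lemma norm_intervalIntegral_cexp_I_mul_le (w : ℝ → ℝ) (a s t : ℝ) :
    ‖∫ r in s..t, exp (I * a * w r)‖ ≤ |t - s| := by
  simpa using intervalIntegral.norm_integral_le_of_norm_le_const (C := 1)
    (fun r _ => (norm_cexp_I_mul_ofReal_mul a (w r)).le)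

lemma hasDerivAt_cexp_I_mul_div {w w' : ℝ → ℝ} {a x u : ℝ} (hw : HasDerivAt w (w' x) x)
    (hw' : HasDerivAt w' u x) (hx : w' x ≠ 0) (ha : a ≠ 0) :
    HasDerivAt (fun r => exp (I * a * w r) / (I * a * w' r))
      (exp (I * a * w x) - exp (I * a * w x) / (I * a) * ↑(u / w' x ^ 2)) x := by
  have hx' : (w' x : ℂ) ≠ 0 := by exact_mod_cast hx
  have ha' : (a : ℂ) ≠ 0 := by exact_mod_cast ha
  refine ((hw.ofReal_comp.const_mul (I * a)).cexp.div (hw'.ofReal_comp.const_mul (I * a))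
    (by simp [ha', hx'])).congr_deriv ?_
  push_cast
  field_simp

lemma integral_cexp_I_mul_eq {w w' w'' : ℝ → ℝ} {s t a : ℝ} (hst : s ≤ t)
    (hw : ∀ r ∈ Icc s t, HasDerivAt w (w' r) r) (hw' : ∀ r ∈ Icc s t, HasDerivAt w' (w'' r) r)
    (hne : ∀ r ∈ Icc s t, w' r ≠ 0) (hint : IntegrableOn (fun r => w'' r / w' r ^ 2) (Icc s t))
    (ha : a ≠ 0) :
    ∫ r in s..t, exp (I * a * w r) =
      exp (I * a * w t) / (I * a * w' t) - exp (I * a * w s) / (I * a * w' s) +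
        ∫ r in s..t, exp (I * a * w r) / (I * a) * ↑(w'' r / w' r ^ 2) := by
  rw [← uIcc_of_le hst] at hw hw' hne hint
  have hE : ContinuousOn (fun r => exp (I * a * w r)) (uIcc s t) :=
    continuousOn_of_forall_continuousAt fun r hr =>
      (continuous_exp.comp (continuous_const.mul continuous_ofReal)).continuousAt.comp
        (hw r hr).continuousAt
  have hG : IntervalIntegrable (fun r => exp (I * a * w r) / (I * a) * ↑(w'' r / w' r ^ 2))
      volume s t :=
    (IntegrableOn.continuousOn_mul (hE.div_const _) hint.ofReal isCompact_uIcc).intervalIntegrable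
  rw [← intervalIntegral.integral_eq_sub_of_hasDerivAt
      (fun r hr => hasDerivAt_cexp_I_mul_div (hw r hr) (hw' r hr) (hne r hr) ha)
      (hE.intervalIntegrable.sub hG),
    intervalIntegral.integral_sub hE.intervalIntegrable hG, sub_add_cancel]

lemma abs_mul_norm_integral_cexp_I_mul_le {w w' w'' : ℝ → ℝ} {s t c : ℝ} (hst : s ≤ t)
    (hc : 0 < c) (hw : ∀ r ∈ Icc s t, HasDerivAt w (w' r) r)
    (hw' : ∀ r ∈ Icc s t, HasDerivAt w' (w'' r) r) (hcw : ∀ r ∈ Icc s t, c ≤ |w' r|)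
    (hint : IntegrableOn (fun r => w'' r / w' r ^ 2) (Icc s t)) (a : ℝ) :
    |a| * ‖∫ r in s..t, exp (I * a * w r)‖ ≤ 2 / c + ∫ r in s..t, |w'' r / w' r ^ 2| := by
  have hq : 0 ≤ ∫ r in s..t, |w'' r / w' r ^ 2| :=
    intervalIntegral.integral_nonneg hst fun _ _ => abs_nonneg _
  rcases eq_or_ne a 0 with rfl | ha
  · simp only [abs_zero, zero_mul]
    positivity
  have haa : 0 < |a| := abs_pos.mpr ha
  have hboundary : ∀ r ∈ Icc s t, ‖exp (I * a * w r) / (I * a * w' r)‖ ≤ 1 / (|a| * c) := by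
    intro r hr
    rw [norm_div, norm_cexp_I_mul_ofReal_mul]
    simp only [norm_mul, norm_I, one_mul, norm_real, Real.norm_eq_abs]
    gcongr
    exact hcw r hr
  have hbulk : ‖∫ r in s..t, exp (I * a * w r) / (I * a) * ↑(w'' r / w' r ^ 2)‖ ≤
      (∫ r in s..t, |w'' r / w' r ^ 2|) / |a| := by
    calc _ ≤ ∫ r in s..t, ‖exp (I * a * w r) / (I * a) * ↑(w'' r / w' r ^ 2)‖ :=
          intervalIntegral.norm_integral_le_integral_norm hst
      _ = ∫ r in s..t, |w'' r / w' r ^ 2| / |a| := by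
          congr 1 with r
          rw [norm_mul, norm_div, norm_cexp_I_mul_ofReal_mul, norm_mul, norm_I, one_mul, norm_real,
            norm_real, Real.norm_eq_abs, Real.norm_eq_abs, one_div_mul_eq_div]
      _ = _ := intervalIntegral.integral_div _ _
  have hne : ∀ r ∈ Icc s t, w' r ≠ 0 := fun r hr => abs_pos.mp (hc.trans_le (hcw r hr))
  rw [integral_cexp_I_mul_eq hst hw hw' hne hint ha]
  calc _ ≤ |a| * (1 / (|a| * c) + 1 / (|a| * c) + (∫ r in s..t, |w'' r / w' r ^ 2|) / |a|) := by
        gcongr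
        refine (norm_add_le _ _).trans (add_le_add ((norm_sub_le _ _).trans ?_) hbulk)
        exact add_le_add (hboundary t ⟨hst, le_rfl⟩) (hboundary s ⟨le_rfl, hst⟩)
    _ = 2 / c + ∫ r in s..t, |w'' r / w' r ^ 2| := by
        field_simp
        ring

lemma rpow_one_sub_mul_le_of_mul_le {x y δ K θ : ℝ} (hx : 0 ≤ x) (hy : 0 ≤ y) (hxδ : x ≤ δ)
    (hyx : y * x ≤ K) (hθ0 : 0 ≤ θ) (hθ1 : θ ≤ 1) :
    y ^ (1 - θ) * x ≤ K ^ (1 - θ) * δ ^ θ := by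
  calc y ^ (1 - θ) * x = (y * x) ^ (1 - θ) * x ^ θ := by
        rw [Real.mul_rpow hy hx, mul_assoc, ← Real.rpow_add' hx (by norm_num), sub_add_cancel,
          Real.rpow_one]
    _ ≤ K ^ (1 - θ) * δ ^ θ := by
        gcongr
        exact Real.rpow_nonneg ((mul_nonneg hy hx).trans hyx) _

theorem stmt_1_general (T : ℝ) (w w' w'' : ℝ → ℝ)
    (hw : ∀ t ∈ Set.Icc (0:ℝ) T, HasDerivAt w (w' t) t)
    (hw' : ∀ t ∈ Set.Icc (0:ℝ) T, HasDerivAt w' (w'' t) t)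
    (c : ℝ) (hc : 0 < c) (hcw : ∀ t ∈ Set.Icc (0:ℝ) T, c ≤ |w' t|)
    (hint : IntegrableOn (fun σ => w'' σ / (w' σ)^2) (Set.Icc 0 T))
    (γ : ℝ) (hγ0 : 0 < γ) (hγ1 : γ < 1) :
    ∃ C : ℝ, ∀ a : ℝ, ∀ s t : ℝ, 0 ≤ s → s < t → t ≤ T →
      (1 + |a|) ^ (1 - γ) *
        ‖∫ r in s..t, Complex.exp (Complex.I * a * (w r))‖ ≤
      C * (t - s) ^ γ := by
  refine ⟨(T + (2 / c + ∫ r in Icc 0 T, |w'' r / w' r ^ 2|)) ^ (1 - γ),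
    fun a s t hs hst htT => ?_⟩
  have hsub : Icc s t ⊆ Icc 0 T := Icc_subset_Icc hs htT
  have hdecay := abs_mul_norm_integral_cexp_I_mul_le hst.le hc (fun r hr => hw r (hsub hr))
    (fun r hr => hw' r (hsub hr)) (fun r hr => hcw r (hsub hr)) (hint.mono_set hsub) a
  have hmono : ∫ r in s..t, |w'' r / w' r ^ 2| ≤ ∫ r in Icc 0 T, |w'' r / w' r ^ 2| := by
    rw [intervalIntegral.integral_of_le hst.le]
    exact setIntegral_mono_set hint.abs (ae_of_all _ fun _ => abs_nonneg _)
      (Ioc_subset_Icc_self.trans hsub).eventuallyLE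
  have hlength := norm_intervalIntegral_cexp_I_mul_le w a s t
  rw [abs_of_pos (sub_pos.2 hst)] at hlength
  refine rpow_one_sub_mul_le_of_mul_le (norm_nonneg _) (by positivity) hlength ?_ hγ0.le hγ1.le
  rw [add_mul, one_mul]
  linarith

/-- Under the hypotheses of Statement 0 (w twice continuously
differentiable, `inf |w'| > 0`, `w''/(w')²` integrable), the path `w` is
`(1-γ, γ)`-irregular for every `γ ∈ (0,1)`: the weighted supremum of the
oscillatory integrals `Φ^w_{s,t}(a) = ∫_s^t e^{iaw_r} dr` is finite. -/
theorem stmt_1 (T : ℝ) (hT : 0 < T) (w w' w'' : ℝ → ℝ)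
    (hw : ∀ t ∈ Set.Icc (0:ℝ) T, HasDerivAt w (w' t) t)
    (hw' : ∀ t ∈ Set.Icc (0:ℝ) T, HasDerivAt w' (w'' t) t)
    (hw'cont : ContinuousOn w' (Set.Icc 0 T))
    (hw''cont : ContinuousOn w'' (Set.Icc 0 T))
    (c : ℝ) (hc : 0 < c) (hcw : ∀ t ∈ Set.Icc (0:ℝ) T, c ≤ |w' t|)
    (hint : IntegrableOn (fun σ => w'' σ / (w' σ)^2) (Set.Icc 0 T))
    (γ : ℝ) (hγ0 : 0 < γ) (hγ1 : γ < 1) :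
    ∃ C : ℝ, ∀ a : ℝ, ∀ s t : ℝ, 0 ≤ s → s < t → t ≤ T →
      (1 + |a|) ^ (1 - γ) *
        ‖∫ r in s..t, Complex.exp (Complex.I * a * (w r))‖ ≤
      C * (t - s) ^ γ :=
  stmt_1_general T w w' w'' hw hw' c hc hcw hint γ hγ0 hγ1
end

section
/- Let w:[0,T]→ℝ be δ-Hölder continuous with T>0. If γ,ρ>0 satisfy γ+δ>1 and ρ>(1−γ)/δ, then w is not (ρ,γ)-irregular, i.e. ‖Φ^w‖_{W^{ρ,γ}_T} = +∞. -/
open MeasureTheory Complex Topology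

/-! On a window `[0, h]` choose the frequency `a = (K h^δ)⁻¹`, so that the phase `a w` moves by at
most `1` there; then the real part of `e^{-i a w_0} Φ^w_{0,h}(a)` is at least `cos 1 · h`. An
irregularity bound `(1 + a)^ρ |Φ^w_{0,h}(a)| ≤ C h^γ` would therefore give
`cos 1 / K^ρ ≤ C h^{δρ + γ - 1}` for every small `h`, which is absurd as `h → 0` because
`δρ + γ - 1 > 0`. -/

theorem nonpos_of_forall_le_mul_rpow {c C T e : ℝ} (hT : 0 < T) (he : 0 < e)
    (h : ∀ x ∈ Set.Ioc 0 T, c ≤ C * x ^ e) : c ≤ 0 := by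
  have hlim : Filter.Tendsto (fun x : ℝ => C * x ^ e) (𝓝[>] 0) (𝓝 0) := by
    have := (Real.continuousAt_rpow_const 0 e (Or.inr he.le)).tendsto.const_mul C
    simpa [Real.zero_rpow he.ne'] using tendsto_nhdsWithin_of_tendsto_nhds this
  refine ge_of_tendsto hlim ?_
  filter_upwards [Ioc_mem_nhdsGT hT] with x hx using h x hx

theorem continuousOn_of_abs_sub_le_mul_rpow {S : Set ℝ} {w : ℝ → ℝ} {K δ : ℝ} (hδ : 0 < δ)
    (hw : ∀ s ∈ S, ∀ t ∈ S, |w t - w s| ≤ K * |t - s| ^ δ) : ContinuousOn w S := by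
  intro s hs
  have hlim : Filter.Tendsto (fun t => K * |t - s| ^ δ) (𝓝 s) (𝓝 0) := by
    have : Continuous (fun t => K * |t - s| ^ δ) := by fun_prop (disch := positivity)
    simpa [Real.zero_rpow hδ.ne'] using this.tendsto s
  rw [ContinuousWithinAt, tendsto_iff_dist_tendsto_zero]
  refine squeeze_zero' (Filter.Eventually.of_forall fun _ => dist_nonneg) ?_
    (hlim.mono_left nhdsWithin_le_nhds)
  filter_upwards [self_mem_nhdsWithin] with t ht using hw s hs t ht

theorem cos_one_mul_le_norm_integral_exp_mul_I {f : ℝ → ℝ} {s t θ : ℝ} (hst : s ≤ t)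
    (hf : ContinuousOn f (Set.Icc s t)) (hθ : ∀ r ∈ Set.Icc s t, |f r - θ| ≤ 1) :
    Real.cos 1 * (t - s) ≤ ‖∫ r in s..t, exp (I * f r)‖ := by
  have hint : IntervalIntegrable (fun r => exp (I * ↑(f r - θ))) volume s t := by
    refine ContinuousOn.intervalIntegrable ?_
    rw [Set.uIcc_of_le hst]
    fun_prop
  have hrot : ∀ r, exp (I * ↑(f r - θ)) = exp (↑(-θ) * I) * exp (I * f r) := fun r => by
    rw [← Complex.exp_add]; push_cast; ring_nf
  calc Real.cos 1 * (t - s) = ∫ _ in s..t, Real.cos 1 := by simp [mul_comm]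
    _ ≤ ∫ r in s..t, Real.cos (f r - θ) := by
      refine intervalIntegral.integral_mono_on hst intervalIntegrable_const ?_ fun r hr => ?_
      · refine ContinuousOn.intervalIntegrable ?_
        rw [Set.uIcc_of_le hst]
        fun_prop
      · rw [← Real.cos_abs (f r - θ)]
        exact Real.cos_le_cos_of_nonneg_of_le_pi (abs_nonneg _)
          (by linarith [Real.pi_gt_three]) (hθ r hr)
    _ = (∫ r in s..t, exp (I * ↑(f r - θ))).re := by
      rw [← RCLike.re_to_complex, ← intervalIntegral.intervalIntegral_re hint]
      simp_rw [RCLike.re_to_complex, mul_comm I, exp_ofReal_mul_I_re]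
    _ ≤ ‖∫ r in s..t, exp (I * ↑(f r - θ))‖ := re_le_norm _
    _ = ‖∫ r in s..t, exp (I * f r)‖ := by
      simp_rw [hrot, intervalIntegral.integral_const_mul, norm_mul, norm_exp_ofReal_mul_I,
        one_mul]

theorem cos_one_mul_le_norm_integral_exp_of_holder {w : ℝ → ℝ} {T K δ h : ℝ} (hK : 0 < K)
    (hδ : 0 < δ) (hw : ∀ s ∈ Set.Icc 0 T, ∀ t ∈ Set.Icc 0 T, |w t - w s| ≤ K * |t - s| ^ δ)
    (hh : 0 < h) (hhT : h ≤ T) :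
    Real.cos 1 * h ≤ ‖∫ r in 0..h, exp (I * ↑(K * h ^ δ)⁻¹ * w r)‖ := by
  have hwh : ∀ s ∈ Set.Icc 0 h, ∀ t ∈ Set.Icc 0 h, |w t - w s| ≤ K * |t - s| ^ δ :=
    fun s hs t ht => hw s ⟨hs.1, hs.2.trans hhT⟩ t ⟨ht.1, ht.2.trans hhT⟩
  set a := (K * h ^ δ)⁻¹
  have hphase : ∀ r ∈ Set.Icc 0 h, |a * w r - a * w 0| ≤ 1 := fun r hr => by
    have hosc : |w r - w 0| ≤ K * h ^ δ := by
      refine (hwh 0 ⟨le_rfl, hh.le⟩ r hr).trans ?_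
      rw [sub_zero, abs_of_nonneg hr.1]
      exact mul_le_mul_of_nonneg_left (Real.rpow_le_rpow hr.1 hr.2 hδ.le) hK.le
    rw [← mul_sub, abs_mul, abs_of_pos (by positivity)]
    exact (mul_le_mul_of_nonneg_left hosc (by positivity)).trans_eq (inv_mul_cancel₀ (by positivity))
  have := cos_one_mul_le_norm_integral_exp_mul_I (f := fun r => a * w r) hh.le
    (continuousOn_const.mul (continuousOn_of_abs_sub_le_mul_rpow hδ hwh)) hphase
  simpa only [sub_zero, ofReal_mul, mul_assoc] using this

theorem cos_one_div_rpow_le_mul_rpow_of_irregular {w : ℝ → ℝ} {T K δ γ ρ C h : ℝ} (hK : 0 < K)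
    (hδ : 0 < δ) (hρ : 0 < ρ)
    (hw : ∀ s ∈ Set.Icc 0 T, ∀ t ∈ Set.Icc 0 T, |w t - w s| ≤ K * |t - s| ^ δ)
    (hh : 0 < h) (hhT : h ≤ T)
    (hC : ∀ a : ℝ, (1 + |a|) ^ ρ * ‖∫ r in 0..h, exp (I * a * w r)‖ ≤ C * h ^ γ) :
    Real.cos 1 / K ^ ρ ≤ C * h ^ (δ * ρ + γ - 1) := by
  set a := (K * h ^ δ)⁻¹
  have ha : 0 < a := by positivity
  have hpow : a ^ ρ ≤ (1 + |a|) ^ ρ := by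
    gcongr
    rw [abs_of_pos ha]
    linarith
  have hlow := cos_one_mul_le_norm_integral_exp_of_holder hK hδ hw hh hhT
  calc Real.cos 1 / K ^ ρ = a ^ ρ * (Real.cos 1 * h) * h ^ (δ * ρ - 1) := by
        rw [Real.inv_rpow (by positivity), Real.mul_rpow hK.le (by positivity),
          ← Real.rpow_mul hh.le, Real.rpow_sub_one hh.ne']
        field_simp
    _ ≤ (1 + |a|) ^ ρ * ‖∫ r in 0..h, exp (I * a * w r)‖ * h ^ (δ * ρ - 1) := by
        gcongr
        exact (mul_pos Real.cos_one_pos hh).le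
    _ ≤ C * h ^ γ * h ^ (δ * ρ - 1) := by
        gcongr ?_ * _
        exact hC a
    _ = C * h ^ (δ * ρ + γ - 1) := by
        rw [mul_assoc, ← Real.rpow_add hh]
        ring_nf

theorem stmt_2_general (T : ℝ) (hT : 0 < T) (w : ℝ → ℝ) (δ : ℝ) (hδ : 0 < δ)
    (Chol : ℝ)
    (hHolder : ∀ s ∈ Set.Icc (0:ℝ) T, ∀ t ∈ Set.Icc (0:ℝ) T,
      |w t - w s| ≤ Chol * |t - s| ^ δ)
    (γ ρ : ℝ) (hρ : 0 < ρ)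
    (hρδ : (1 - γ) / δ < ρ) :
    ¬ ∃ C : ℝ, ∀ a : ℝ, ∀ s t : ℝ, 0 ≤ s → s < t → t ≤ T →
      (1 + |a|) ^ ρ *
        ‖∫ r in s..t, Complex.exp (Complex.I * a * (w r))‖ ≤
      C * (t - s) ^ γ := by
  rintro ⟨C, hC⟩
  set K := max Chol 1
  have hK : 0 < K := zero_lt_one.trans_le (le_max_right _ _)
  have hw : ∀ s ∈ Set.Icc 0 T, ∀ t ∈ Set.Icc 0 T, |w t - w s| ≤ K * |t - s| ^ δ :=
    fun s hs t ht => (hHolder s hs t ht).trans (by gcongr; exact le_max_left _ _)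
  have he : 0 < δ * ρ + γ - 1 := by
    have := (div_lt_iff₀ hδ).mp hρδ
    linarith
  have hbound := nonpos_of_forall_le_mul_rpow hT he fun h ⟨hh, hhT⟩ =>
    cos_one_div_rpow_le_mul_rpow_of_irregular hK hδ hρ hw hh hhT
      fun a => by simpa using hC a 0 h le_rfl hh hhT
  have : 0 < Real.cos 1 / K ^ ρ := div_pos Real.cos_one_pos (by positivity)
  linarith

/-- A `δ`-Hölder function `w` on `[0,T]` is not `(ρ,γ)`-irregular
when `γ + δ > 1` and `ρ > (1-γ)/δ`: the irregularity norm
`sup_a sup_{s<t} (1+|a|)^ρ |Φ^w_{s,t}(a)|/|t-s|^γ` is infinite, i.e. no finite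
constant `C` dominates it. -/
theorem stmt_2 (T : ℝ) (hT : 0 < T) (w : ℝ → ℝ) (δ : ℝ) (hδ : 0 < δ)
    (Chol : ℝ)
    (hHolder : ∀ s ∈ Set.Icc (0:ℝ) T, ∀ t ∈ Set.Icc (0:ℝ) T,
      |w t - w s| ≤ Chol * |t - s| ^ δ)
    (γ ρ : ℝ) (hγ : 0 < γ) (hρ : 0 < ρ)
    (hγδ : 1 < γ + δ) (hρδ : (1 - γ) / δ < ρ) :
    ¬ ∃ C : ℝ, ∀ a : ℝ, ∀ s t : ℝ, 0 ≤ s → s < t → t ≤ T →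
      (1 + |a|) ^ ρ *
        ‖∫ r in s..t, Complex.exp (Complex.I * a * (w r))‖ ≤
      C * (t - s) ^ γ :=
  stmt_2_general T hT w δ hδ Chol hHolder γ ρ hρ hρδ
end

section
/- There is no Lipschitz continuous function w:[0,T]→ℝ (T>0) that is ρ-irregular for any ρ > 1/2; i.e., if w is Lipschitz and (ρ,γ)-irregular with γ>1/2, then ρ ≤ 1/2. -/
open MeasureTheory Complex Set Filter
open scoped NNReal

/-!
If `w` is `K`-Lipschitz, then on an interval of length `ε = 1/(K a)` the phase `a w` moves by at
most one radian, so the oscillatory integral has no cancellation: `‖Φ_{0,ε}(a)‖ ≥ ε/2`.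
Irregularity then gives `a^ρ ε ≲ ε^γ ≤ ε^{1/2}`, i.e. `a^{ρ - 1/2} ≲ √K`, which fails as
`a → ∞` once `ρ > 1/2`.
-/

lemma sub_div_two_le_norm_integral_exp_mul_I {θ : ℝ → ℝ} {s t : ℝ} (hst : s ≤ t)
    (hθ : ContinuousOn θ (Icc s t)) (hosc : ∀ r ∈ Icc s t, |θ r - θ s| ≤ 1) :
    (t - s) / 2 ≤ ‖∫ r in s..t, exp (θ r * I)‖ := by
  have hrot : ∫ r in s..t, exp (θ r * I) =
      exp (θ s * I) * ∫ r in s..t, exp ((θ r - θ s : ℝ) * I) := by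
    rw [← intervalIntegral.integral_const_mul]
    refine intervalIntegral.integral_congr fun r _ => ?_
    rw [← exp_add]
    push_cast
    ring_nf
  have hcont : ContinuousOn (fun r => θ r - θ s) (Icc s t) := hθ.sub continuousOn_const
  have hint : IntervalIntegrable (fun r => exp ((θ r - θ s : ℝ) * I)) volume s t :=
    (continuous_exp.comp_continuousOn ((continuous_ofReal.comp_continuousOn hcont).mul
      continuousOn_const)).intervalIntegrable_of_Icc hst
  calc (t - s) / 2
    _ = ∫ _ in s..t, (1 / 2 : ℝ) := by rw [intervalIntegral.integral_const, smul_eq_mul]; ring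
    _ ≤ ∫ r in s..t, Real.cos (θ r - θ s) := by
      refine intervalIntegral.integral_mono_on hst intervalIntegrable_const
        ((Real.continuous_cos.comp_continuousOn hcont).intervalIntegrable_of_Icc hst)
        fun r hr => ?_
      have := abs_le.mp (hosc r hr)
      nlinarith [Real.one_sub_sq_div_two_le_cos (x := θ r - θ s)]
    _ = (∫ r in s..t, exp ((θ r - θ s : ℝ) * I)).re := by
      rw [← RCLike.re_to_complex, ← intervalIntegral.intervalIntegral_re hint]
      simp only [RCLike.re_to_complex, exp_ofReal_mul_I_re]
    _ ≤ ‖∫ r in s..t, exp ((θ r - θ s : ℝ) * I)‖ := re_le_norm _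
    _ = ‖∫ r in s..t, exp (θ r * I)‖ := by
      rw [hrot, norm_mul, norm_exp_ofReal_mul_I, one_mul]

lemma LipschitzOnWith.sub_div_two_le_norm_integral_exp {w : ℝ → ℝ} {K : ℝ≥0} {s t : ℝ}
    (hw : LipschitzOnWith K w (Icc s t)) (hst : s ≤ t) {a : ℝ} (ha : |a| * K * (t - s) ≤ 1) :
    (t - s) / 2 ≤ ‖∫ r in s..t, exp (I * a * w r)‖ := by
  have hexp : ∀ r, I * a * w r = ((a * w r : ℝ) : ℂ) * I := fun r => by push_cast; ring
  simp_rw [hexp]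
  refine sub_div_two_le_norm_integral_exp_mul_I hst (continuousOn_const.mul hw.continuousOn)
    fun r hr => ?_
  have hs : s ∈ Icc s t := left_mem_Icc.mpr hst
  have hdist := hw.dist_le_mul r hr s hs
  rw [Real.dist_eq, Real.dist_eq, abs_of_nonneg (sub_nonneg.mpr hr.1)] at hdist
  calc |a * w r - a * w s| = |a| * |w r - w s| := by rw [← mul_sub, abs_mul]
    _ ≤ |a| * (K * (t - s)) := by gcongr; exact hdist.trans (by gcongr; exact hr.2)
    _ ≤ 1 := by linarith

lemma rpow_sub_half_le_of_mul_inv_le {a M ρ γ C : ℝ} (ha : 0 < a) (hM : 0 < M)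
    (hMa : 1 ≤ M * a) (hρ : 0 ≤ ρ) (hγ : 1 / 2 ≤ γ)
    (h : (1 + a) ^ ρ * ((M * a)⁻¹ / 2) ≤ C * (M * a)⁻¹ ^ γ) :
    a ^ (ρ - 1 / 2) ≤ 2 * C * √M := by
  set ε := (M * a)⁻¹ with hε_def
  have hε : 0 < ε := by positivity
  have hε1 : ε ≤ 1 := inv_le_one_of_one_le₀ hMa
  have hsqrt : √a * √ε * √M = 1 := by
    rw [← Real.sqrt_mul ha.le, ← Real.sqrt_mul (by positivity), hε_def,
      show a * (M * a)⁻¹ * M = 1 by field_simp, Real.sqrt_one]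
  have hsplit : a ^ ρ = a ^ (ρ - 1 / 2) * √a := by
    rw [Real.sqrt_eq_rpow, ← Real.rpow_add ha]; ring_nf
  have hbound : a ^ ρ * (√ε * √ε) ≤ 2 * C * √ε :=
    calc a ^ ρ * (√ε * √ε) = a ^ ρ * ε := by rw [Real.mul_self_sqrt hε.le]
      _ ≤ (1 + a) ^ ρ * ε := by gcongr; linarith
      _ ≤ 2 * (C * ε ^ γ) := by linarith
      _ ≤ 2 * (C * ε ^ (1 / 2 : ℝ)) := by
        have hC : 0 ≤ C := by
          have : 0 < (1 + a) ^ ρ * (ε / 2) := by positivity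
          exact (pos_of_mul_pos_left (this.trans_le h) (by positivity)).le
        gcongr 2 * (C * ?_)
        exact Real.rpow_le_rpow_of_exponent_ge hε hε1 hγ
      _ = 2 * C * √ε := by rw [Real.sqrt_eq_rpow]; ring
  have hapow : a ^ ρ * √ε ≤ 2 * C := by
    rw [← mul_assoc] at hbound
    exact le_of_mul_le_mul_right hbound (by positivity)
  calc a ^ (ρ - 1 / 2) = a ^ ρ * √ε * √M := by
        rw [hsplit, mul_assoc, mul_assoc, ← mul_assoc √a, hsqrt, mul_one]
    _ ≤ 2 * C * √M := by gcongr

theorem stmt_3_general (T : ℝ) (hT : 0 < T) (w : ℝ → ℝ) (L : ℝ)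
    (hLip : ∀ s ∈ Set.Icc (0:ℝ) T, ∀ t ∈ Set.Icc (0:ℝ) T,
      |w t - w s| ≤ L * |t - s|)
    (γ ρ : ℝ) (hγ : 1/2 < γ)
    (hirr : ∃ C : ℝ, ∀ a : ℝ, ∀ s t : ℝ, 0 ≤ s → s < t → t ≤ T →
      (1 + |a|) ^ ρ *
        ‖∫ r in s..t, Complex.exp (Complex.I * a * (w r))‖ ≤
      C * (t - s) ^ γ) :
    ρ ≤ 1/2 := by
  obtain ⟨C, hC⟩ := hirr
  by_contra! hρ_half
  set K : ℝ≥0 := L.toNNReal + 1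
  have hK : (1 : ℝ) ≤ K := by simp [K]
  have hw : LipschitzOnWith K w (Icc 0 T) := LipschitzOnWith.of_dist_le_mul fun x hx y hy =>
    calc |w x - w y| ≤ L * |x - y| := hLip y hy x hx
      _ ≤ K * |x - y| := by gcongr; push_cast [K]; linarith [Real.le_coe_toNNReal L]
  have hlarge : ∀ a ≥ max 1 T⁻¹, a ^ (ρ - 1 / 2) ≤ 2 * C * √K := by
    intro a ha
    have ha0 : 0 < a := lt_of_lt_of_le one_pos (le_of_max_le_left ha)
    have hKa : max 1 T⁻¹ ≤ K * a := ha.trans (le_mul_of_one_le_left ha0.le hK)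
    set ε := ((K : ℝ) * a)⁻¹
    have hε : 0 < ε := by positivity
    have hεT : ε ≤ T := inv_le_of_inv_le₀ hT (le_of_max_le_right hKa)
    have hlow := (hw.mono (Icc_subset_Icc_right hεT)).sub_div_two_le_norm_integral_exp hε.le
      (a := a) (by
        rw [sub_zero, abs_of_pos ha0, mul_comm a]; exact (mul_inv_cancel₀ (by positivity)).le)
    have hirr := hC a 0 ε le_rfl hε hεT
    rw [abs_of_pos ha0, sub_zero] at hirr
    rw [sub_zero] at hlow
    exact rpow_sub_half_le_of_mul_inv_le ha0 (by positivity) (le_of_max_le_left hKa)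
      (by linarith) hγ.le ((mul_le_mul_of_nonneg_left hlow (by positivity)).trans hirr)
  obtain ⟨a, ha, ha_large⟩ := ((eventually_ge_atTop (max 1 T⁻¹)).and
    ((tendsto_rpow_atTop (by linarith : 0 < ρ - 1 / 2)).eventually_gt_atTop (2 * C * √K))).exists
  linarith [hlarge a ha]

/-- No Lipschitz function `w : [0,T] → ℝ` is `ρ`-irregular for
`ρ > 1/2`: if `w` is Lipschitz on `[0,T]` and `(ρ,γ)`-irregular with
`γ > 1/2`, then `ρ ≤ 1/2`. -/
theorem stmt_3 (T : ℝ) (hT : 0 < T) (w : ℝ → ℝ) (L : ℝ)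
    (hLip : ∀ s ∈ Set.Icc (0:ℝ) T, ∀ t ∈ Set.Icc (0:ℝ) T,
      |w t - w s| ≤ L * |t - s|)
    (γ ρ : ℝ) (hγ : 1/2 < γ) (hρ : 0 < ρ)
    (hirr : ∃ C : ℝ, ∀ a : ℝ, ∀ s t : ℝ, 0 ≤ s → s < t → t ≤ T →
      (1 + |a|) ^ ρ *
        ‖∫ r in s..t, Complex.exp (Complex.I * a * (w r))‖ ≤
      C * (t - s) ^ γ) :
    ρ ≤ 1/2 :=
  stmt_3_general T hT w L hLip γ ρ hγ hirr
end

section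
/- Conservation law for Young equations: suppose X ∈ C^γ([0,T], Lip_M(V)) with γ>1/2 and that for all φ∈V with ‖φ‖_V ≤ A one has |‖φ + X_{s,t}(φ)‖_V − ‖φ‖_V| ≤ C_A |t−s|^ρ with ρ>1. Then any solution ψ ∈ C^{1/2}([0,T],V) of ψ_t = ψ_0 + ∫_0^t X_{dσ}(ψ_σ) satisfies ‖ψ_t‖_V = ‖ψ_0‖_V for all t∈[0,T]. -/
/-! The Young expansion `ψ_t = ψ_s + X_{s,t}(ψ_s) + R_{s,t}` and the conservation hypothesis give
`|‖ψ_t‖ - ‖ψ_s‖| ≤ C |t - s|^(γ + 1/2) + C_A |t - s|^ρ`, with `C_A` uniform because a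
`1/2`-Hölder path is bounded. Both exponents exceed `1`, so `t ↦ ‖ψ_t‖` has vanishing right
derivative and is therefore constant. -/

open Set Filter Topology Asymptotics

theorem isLittleO_const_mul_rpow_nhdsGE_zero {θ : ℝ} (hθ : 1 < θ) (C : ℝ) :
    (fun h : ℝ => C * h ^ θ) =o[𝓝[≥] 0] id := by
  have hsmall : Tendsto (fun h : ℝ => C * h ^ (θ - 1)) (𝓝[≥] 0) (𝓝 0) := by
    have : ContinuousAt (fun h : ℝ => C * h ^ (θ - 1)) 0 :=
      continuousAt_const.mul (Real.continuousAt_rpow_const _ _ (Or.inr (by linarith)))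
    simpa [Real.zero_rpow (by linarith : θ - 1 ≠ 0)] using
      tendsto_nhdsWithin_of_tendsto_nhds this.tendsto
  have hfac : (fun h : ℝ => C * h ^ (θ - 1) * id h) =ᶠ[𝓝[≥] 0] fun h => C * h ^ θ := by
    filter_upwards [self_mem_nhdsWithin] with h (hh : 0 ≤ h)
    rw [id, mul_assoc, ← Real.rpow_add_one' hh (by linarith), sub_add_cancel]
  refine (((isLittleO_one_iff ℝ).2 hsmall).mul_isBigO (isBigO_refl id _)).congr' hfac ?_
  exact Eventually.of_forall fun h => one_mul _

theorem constant_of_abs_sub_le_isLittleO {g ω : ℝ → ℝ} {a b : ℝ} (hω : ω =o[𝓝[≥] 0] id)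
    (h : ∀ s ∈ Icc a b, ∀ t ∈ Icc a b, s ≤ t → |g t - g s| ≤ ω (t - s)) :
    ∀ t ∈ Icc a b, g t = g a := by
  have hω0 : Tendsto ω (𝓝[≥] 0) (𝓝 0) :=
    hω.trans_tendsto (tendsto_nhdsWithin_of_tendsto_nhds tendsto_id)
  have hsymm : ∀ s ∈ Icc a b, ∀ t ∈ Icc a b, |g t - g s| ≤ ω |t - s| := by
    intro s hs t ht
    rcases le_total s t with hst | hts
    · simpa [abs_of_nonneg (sub_nonneg.2 hst)] using h s hs t ht hst
    · simpa [abs_sub_comm, abs_of_nonneg (sub_nonneg.2 hts)] using h t ht s hs hts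
  refine constant_of_has_deriv_right_zero (fun x hx => ?_) (fun x hx => ?_)
  · have hdist : Tendsto (fun y => |y - x|) (𝓝[Icc a b] x) (𝓝[≥] 0) := by
      refine tendsto_nhdsWithin_iff.2 ⟨?_, Eventually.of_forall fun y => mem_Ici.2 (abs_nonneg _)⟩
      exact ((continuous_id.sub continuous_const).abs.tendsto' x 0 (by simp)).mono_left
        nhdsWithin_le_nhds
    rw [ContinuousWithinAt, tendsto_iff_norm_sub_tendsto_zero]
    refine squeeze_zero' (Eventually.of_forall fun y => norm_nonneg _) ?_ (hω0.comp hdist)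
    filter_upwards [self_mem_nhdsWithin] with y hy
    exact hsymm x hx y hy
  · have hshift : Tendsto (fun y => y - x) (𝓝[≥] x) (𝓝[≥] 0) := by
      refine tendsto_nhdsWithin_iff.2 ⟨?_, ?_⟩
      · exact ((continuous_id.sub continuous_const).tendsto' x 0 (by simp)).mono_left
          nhdsWithin_le_nhds
      · filter_upwards [self_mem_nhdsWithin] with y (hy : x ≤ y)
        exact sub_nonneg.2 hy
    rw [hasDerivWithinAt_iff_isLittleO]
    refine IsBigO.trans_isLittleO (IsBigO.of_bound 1 ?_) (hω.comp_tendsto hshift)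
    filter_upwards [Ico_mem_nhdsGE hx.2] with y hy
    have := h x (Ico_subset_Icc_self hx) y ⟨hx.1.trans hy.1, hy.2.le⟩ hy.1
    simpa using this.trans (le_abs_self _)

theorem norm_le_of_norm_sub_le_rpow {V : Type*} [SeminormedAddCommGroup V] {ψ : ℝ → V}
    {a b C α : ℝ} (hα : 0 ≤ α) (h : ∀ s ∈ Icc a b, ‖ψ s - ψ a‖ ≤ C * |s - a| ^ α) :
    ∀ s ∈ Icc a b, ‖ψ s‖ ≤ ‖ψ a‖ + |C| * (b - a) ^ α := by
  intro s hs
  have hdist : |s - a| ^ α ≤ (b - a) ^ α := by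
    rw [abs_of_nonneg (sub_nonneg.2 hs.1)]
    exact Real.rpow_le_rpow (sub_nonneg.2 hs.1) (by linarith [hs.2]) hα
  calc ‖ψ s‖ ≤ ‖ψ a‖ + ‖ψ s - ψ a‖ := norm_le_insert' _ _
    _ ≤ ‖ψ a‖ + |C| * (b - a) ^ α := by
      gcongr
      exact (h s hs).trans (mul_le_mul (le_abs_self C) hdist (by positivity) (abs_nonneg C))

theorem abs_norm_sub_norm_le_norm_sub_sub_add {V : Type*} [SeminormedAddCommGroup V]
    (x y d : V) : |‖y‖ - ‖x‖| ≤ ‖y - x - d‖ + |‖x + d‖ - ‖x‖| :=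
  calc |‖y‖ - ‖x‖| ≤ |‖y‖ - ‖x + d‖| + |‖x + d‖ - ‖x‖| := abs_sub_le _ _ _
    _ ≤ ‖y - (x + d)‖ + |‖x + d‖ - ‖x‖| := by gcongr; exact abs_norm_sub_norm_le _ _
    _ = ‖y - x - d‖ + |‖x + d‖ - ‖x‖| := by rw [sub_add_eq_sub_sub]

theorem stmt_8_general (V : Type*) [NormedAddCommGroup V]
    (T : ℝ)
    (γ ρ : ℝ) (hγ : 1/2 < γ) (hρ : 1 < ρ)
    (X : ℝ → V → V)
    (hcons : ∀ A : ℝ, 0 ≤ A → ∃ CA : ℝ, ∀ φ : V, ‖φ‖ ≤ A →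
      ∀ s ∈ Icc (0:ℝ) T, ∀ t ∈ Icc (0:ℝ) T, s ≤ t →
        |‖φ + (X t φ - X s φ)‖ - ‖φ‖| ≤ CA * (t - s) ^ ρ)
    (ψ : ℝ → V)
    (hψHolder : ∃ C : ℝ, ∀ s ∈ Icc (0:ℝ) T, ∀ t ∈ Icc (0:ℝ) T,
      ‖ψ t - ψ s‖ ≤ C * |t - s| ^ ((1:ℝ)/2))
    (hψeq : ∃ C : ℝ, ∀ s ∈ Icc (0:ℝ) T, ∀ t ∈ Icc (0:ℝ) T, s ≤ t →
      ‖ψ t - ψ s - (X t (ψ s) - X s (ψ s))‖ ≤ C * (t - s) ^ (γ + 1/2)) :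
    ∀ t ∈ Icc (0:ℝ) T, ‖ψ t‖ = ‖ψ 0‖ := by
  intro t ht
  obtain ⟨CH, hCH⟩ := hψHolder
  obtain ⟨CR, hCR⟩ := hψeq
  have hbound := norm_le_of_norm_sub_le_rpow (by norm_num)
    fun s hs => hCH 0 ⟨le_rfl, hs.1.trans hs.2⟩ s hs
  obtain ⟨CA, hCA⟩ := hcons _ ((norm_nonneg _).trans (hbound t ht))
  refine constant_of_abs_sub_le_isLittleO (g := fun t => ‖ψ t‖)
    ((isLittleO_const_mul_rpow_nhdsGE_zero (θ := γ + 1/2) (by linarith) CR).add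
      (isLittleO_const_mul_rpow_nhdsGE_zero hρ CA)) (fun s hs t' ht' hst => ?_) t ht
  exact (abs_norm_sub_norm_le_norm_sub_sub_add (ψ s) (ψ t') _).trans
    (add_le_add (hCR s hs t' ht' hst) (hCA (ψ s) (hbound s hs) s hs t' ht' hst))

/-- conservation law for Young equations: if
`X ∈ C^γ Lip_M(V)` with `γ > 1/2`, the norm-conservation hypothesis
`|‖φ + X_{s,t}(φ)‖ - ‖φ‖| ≤ C_A |t-s|^ρ` holds for `‖φ‖ ≤ A` with `ρ > 1`,
and `ψ ∈ C^{1/2}` solves the Young equation (so that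
`ψ_t = ψ_s + X_{s,t}(ψ_s) + R_{s,t}` with `‖R_{s,t}‖ ≤ C|t-s|^{γ+1/2}`),
then `‖ψ_t‖ = ‖ψ_0‖` on `[0,T]`. -/
theorem stmt_8 (V : Type*) [NormedAddCommGroup V] [NormedSpace ℝ V]
    (T : ℝ) (hT : 0 < T) (M : ℝ) (hM : 0 ≤ M)
    (γ ρ : ℝ) (hγ : 1/2 < γ) (hγ1 : γ ≤ 1) (hρ : 1 < ρ)
    (X : ℝ → V → V) (K : ℝ) (hK : 0 ≤ K)
    (hX : ∀ s ∈ Icc (0:ℝ) T, ∀ t ∈ Icc (0:ℝ) T, ∀ φ φ' : V,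
      ‖(X t φ - X s φ) - (X t φ' - X s φ')‖ ≤
        K * |t - s| ^ γ * (1 + ‖φ‖ + ‖φ'‖) ^ M * ‖φ - φ'‖)
    (hcons : ∀ A : ℝ, 0 ≤ A → ∃ CA : ℝ, ∀ φ : V, ‖φ‖ ≤ A →
      ∀ s ∈ Icc (0:ℝ) T, ∀ t ∈ Icc (0:ℝ) T, s ≤ t →
        |‖φ + (X t φ - X s φ)‖ - ‖φ‖| ≤ CA * (t - s) ^ ρ)
    (ψ : ℝ → V)
    (hψHolder : ∃ C : ℝ, ∀ s ∈ Icc (0:ℝ) T, ∀ t ∈ Icc (0:ℝ) T,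
      ‖ψ t - ψ s‖ ≤ C * |t - s| ^ ((1:ℝ)/2))
    (hψeq : ∃ C : ℝ, ∀ s ∈ Icc (0:ℝ) T, ∀ t ∈ Icc (0:ℝ) T, s ≤ t →
      ‖ψ t - ψ s - (X t (ψ s) - X s (ψ s))‖ ≤ C * (t - s) ^ (γ + 1/2)) :
    ∀ t ∈ Icc (0:ℝ) T, ‖ψ t‖ = ‖ψ 0‖ :=
  stmt_8_general V T γ ρ hγ hρ X hcons ψ hψHolder hψeq
end

section
/- Trilinear estimate for the modulated derivative NLS operator: for θ>0, ρ > max(1/2, θ) and α ≥ θ/2, the quantity I = sup_{k∈ℤ\{0\}} |k|^{2α+2θ} Σ_{−k₁+k₂+k₃=k, k₂≠k, k₃≠k, k₁k₂k₃≠0} |k₁k₂k₃|^{−2α} |k−k₂|^{−2ρ} |k−k₃|^{−2ρ} is finite. -/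
/-!
Write `k₁ = k₂ + k₃ - k`. Since `|k| ≤ |k₁| + |k₂| + |k₃|`, the factor `|k|^{2α}` is at most
`3^{2α}` times one of the `|kᵢ|^{2α}` and cancels the corresponding decay factor. The three
resulting double sums are handled by the discrete convolution bound
`∑_l |l|⁻ᵃ |m - l|⁻ᵇ ≲ |m|⁻ᶜ` (for `0 ≤ c ≤ a, b` and `a + b - c > 1`): when the `k₁` factor is
cancelled the sum factors into two convolutions, each `≲ |k|^{-θ}`; otherwise the inner sum is
`≲ |k₂|^{-θ}` and the outer one, with exponent `2α + θ`, is `≲ |k|^{-2θ}`.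
All sums are taken in `ℝ≥0∞`, where Fubini and rearrangement need no summability side conditions.
-/

open scoped ENNReal

/-- `|n|⁻ˢ`, set to `0` at `n = 0` so that the excluded frequencies drop out of every sum. -/
noncomputable def invPowWeight (s : ℝ) (n : ℤ) : ℝ≥0∞ :=
  if n = 0 then 0 else ENNReal.ofReal (|(n : ℝ)| ^ (-s))

lemma one_le_abs_intCast {n : ℤ} (hn : n ≠ 0) : (1 : ℝ) ≤ |(n : ℝ)| := by
  rw [← Int.cast_abs]
  exact_mod_cast Int.one_le_abs hn

@[simp]
lemma invPowWeight_zero (s : ℝ) : invPowWeight s 0 = 0 := if_pos rfl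

lemma invPowWeight_of_ne_zero (s : ℝ) {n : ℤ} (hn : n ≠ 0) :
    invPowWeight s n = ENNReal.ofReal (|(n : ℝ)| ^ (-s)) :=
  if_neg hn

lemma invPowWeight_mul_invPowWeight (a b : ℝ) (n : ℤ) :
    invPowWeight a n * invPowWeight b n = invPowWeight (a + b) n := by
  rcases eq_or_ne n 0 with rfl | hn
  · simp
  have hn0 : 0 < |(n : ℝ)| := one_pos.trans_le (one_le_abs_intCast hn)
  rw [invPowWeight_of_ne_zero _ hn, invPowWeight_of_ne_zero _ hn, invPowWeight_of_ne_zero _ hn,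
    ← ENNReal.ofReal_mul (by positivity), ← Real.rpow_add hn0, neg_add]

lemma ofReal_rpow_mul_invPowWeight (s : ℝ) {k : ℤ} (hk : k ≠ 0) :
    ENNReal.ofReal (|(k : ℝ)| ^ s) * invPowWeight s k = 1 := by
  have hk0 : 0 < |(k : ℝ)| := one_pos.trans_le (one_le_abs_intCast hk)
  rw [invPowWeight_of_ne_zero _ hk, ← ENNReal.ofReal_mul (by positivity), ← Real.rpow_add hk0,
    add_neg_cancel, Real.rpow_zero, ENNReal.ofReal_one]

lemma invPowWeight_le_rpow_mul {s C : ℝ} (hs : 0 ≤ s) {n m : ℤ} (hm : m ≠ 0)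
    (h : |(m : ℝ)| ≤ C * |(n : ℝ)|) :
    invPowWeight s n ≤ ENNReal.ofReal (C ^ s) * invPowWeight s m := by
  have hm1 := one_le_abs_intCast hm
  have hn : n ≠ 0 := by rintro rfl; simp at h; exact hm h
  have hn0 : 0 < |(n : ℝ)| := one_pos.trans_le (one_le_abs_intCast hn)
  have hC : 0 < C := pos_of_mul_pos_left (by linarith) hn0.le
  rw [invPowWeight_of_ne_zero _ hn, invPowWeight_of_ne_zero _ hm,
    ← ENNReal.ofReal_mul (by positivity)]
  refine ENNReal.ofReal_le_ofReal ?_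
  calc |(n : ℝ)| ^ (-s) = C ^ s * (C * |(n : ℝ)|) ^ (-s) := by
        rw [Real.mul_rpow hC.le hn0.le, Real.rpow_neg hC.le, ← mul_assoc,
          mul_inv_cancel₀ (by positivity), one_mul]
    _ ≤ C ^ s * |(m : ℝ)| ^ (-s) := by
        gcongr _ * ?_
        exact Real.rpow_le_rpow_of_nonpos (by linarith) h (by linarith)

lemma invPowWeight_mul_le_add {a b : ℝ} (ha : 0 ≤ a) (hb : 0 ≤ b) (n m : ℤ) :
    invPowWeight a n * invPowWeight b m ≤ invPowWeight (a + b) n + invPowWeight (a + b) m := by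
  rcases le_total |n| |m| with h | h
  · rcases eq_or_ne n 0 with rfl | hn
    · simp
    calc invPowWeight a n * invPowWeight b m ≤ invPowWeight a n * invPowWeight b n := by
          gcongr
          simpa using invPowWeight_le_rpow_mul hb hn (C := 1) (by rw [one_mul]; exact_mod_cast h)
      _ ≤ _ := by rw [invPowWeight_mul_invPowWeight]; exact le_self_add
  · rcases eq_or_ne m 0 with rfl | hm
    · simp
    calc invPowWeight a n * invPowWeight b m ≤ invPowWeight a m * invPowWeight b m := by
          gcongr
          simpa using invPowWeight_le_rpow_mul ha hm (C := 1) (by rw [one_mul]; exact_mod_cast h)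
      _ ≤ _ := by rw [invPowWeight_mul_invPowWeight]; exact le_add_self

lemma tsum_invPowWeight_ne_top {s : ℝ} (hs : 1 < s) : ∑' n : ℤ, invPowWeight s n ≠ ⊤ := by
  have hle : ∀ n : ℤ, invPowWeight s n ≤ ENNReal.ofReal (|(n : ℝ)| ^ (-s)) := fun n => by
    unfold invPowWeight; split_ifs <;> simp
  refine ne_top_of_le_ne_top ?_ (ENNReal.tsum_le_tsum hle)
  rw [← ENNReal.ofReal_tsum_of_nonneg (fun n => by positivity) (Real.summable_abs_int_rpow hs)]
  exact ENNReal.ofReal_ne_top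

lemma tsum_invPowWeight_sub (s : ℝ) (m : ℤ) :
    ∑' l : ℤ, invPowWeight s (m - l) = ∑' n : ℤ, invPowWeight s n :=
  (Equiv.subLeft m).tsum_eq (invPowWeight s)

lemma tsum_invPowWeight_mul_sub_le {a b : ℝ} (ha : 0 ≤ a) (hb : 0 ≤ b) (m : ℤ) :
    ∑' l : ℤ, invPowWeight a l * invPowWeight b (m - l) ≤
      2 * ∑' n : ℤ, invPowWeight (a + b) n :=
  calc ∑' l : ℤ, invPowWeight a l * invPowWeight b (m - l)
      ≤ ∑' l : ℤ, (invPowWeight (a + b) l + invPowWeight (a + b) (m - l)) :=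
        ENNReal.tsum_le_tsum fun l => invPowWeight_mul_le_add ha hb l (m - l)
    _ = 2 * ∑' n : ℤ, invPowWeight (a + b) n := by
        rw [ENNReal.tsum_add, tsum_invPowWeight_sub, two_mul]

/-- Whichever of `l`, `m - l` is at least `|m| / 2` can give up a factor `2ᶜ |m|⁻ᶜ` of its decay. -/
lemma invPowWeight_mul_sub_le {a b c : ℝ} (hc : 0 ≤ c) {m : ℤ} (hm : m ≠ 0) (l : ℤ) :
    invPowWeight a l * invPowWeight b (m - l) ≤
      ENNReal.ofReal (2 ^ c) * invPowWeight c m *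
        (invPowWeight (a - c) l * invPowWeight b (m - l) +
          invPowWeight a l * invPowWeight (b - c) (m - l)) := by
  have htri : |m| ≤ |l| + |m - l| := by simpa using abs_add_le l (m - l)
  have split (s : ℝ) (n : ℤ) : invPowWeight s n = invPowWeight c n * invPowWeight (s - c) n := by
    rw [invPowWeight_mul_invPowWeight, add_sub_cancel]
  rcases (by omega : |m| ≤ 2 * |l| ∨ |m| ≤ 2 * |m - l|) with h | h
  · have hl := invPowWeight_le_rpow_mul hc hm (n := l) (C := 2) (by exact_mod_cast h)
    calc invPowWeight a l * invPowWeight b (m - l)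
        = invPowWeight c l * (invPowWeight (a - c) l * invPowWeight b (m - l)) := by
          rw [split a l, mul_assoc]
      _ ≤ ENNReal.ofReal (2 ^ c) * invPowWeight c m *
            (invPowWeight (a - c) l * invPowWeight b (m - l)) := by gcongr
      _ ≤ _ := by gcongr; exact le_self_add
  · have hml := invPowWeight_le_rpow_mul hc hm (n := m - l) (C := 2) (by exact_mod_cast h)
    calc invPowWeight a l * invPowWeight b (m - l)
        = invPowWeight c (m - l) * (invPowWeight a l * invPowWeight (b - c) (m - l)) := by
          rw [split b (m - l)]; ring
      _ ≤ ENNReal.ofReal (2 ^ c) * invPowWeight c m *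
            (invPowWeight a l * invPowWeight (b - c) (m - l)) := by gcongr
      _ ≤ _ := by gcongr; exact le_add_self

lemma tsum_invPowWeight_mul_sub_le_of_ne_zero {a b c s : ℝ} (hc : 0 ≤ c) (hca : c ≤ a)
    (hcb : c ≤ b) (hs : a + b - c = s) {m : ℤ} (hm : m ≠ 0) :
    ∑' l : ℤ, invPowWeight a l * invPowWeight b (m - l) ≤
      ENNReal.ofReal (2 ^ c) * invPowWeight c m * (4 * ∑' n : ℤ, invPowWeight s n) :=
  calc ∑' l : ℤ, invPowWeight a l * invPowWeight b (m - l)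
      ≤ ∑' l : ℤ, ENNReal.ofReal (2 ^ c) * invPowWeight c m *
          (invPowWeight (a - c) l * invPowWeight b (m - l) +
            invPowWeight a l * invPowWeight (b - c) (m - l)) :=
        ENNReal.tsum_le_tsum (invPowWeight_mul_sub_le hc hm)
    _ = ENNReal.ofReal (2 ^ c) * invPowWeight c m *
          (∑' l : ℤ, invPowWeight (a - c) l * invPowWeight b (m - l) +
            ∑' l : ℤ, invPowWeight a l * invPowWeight (b - c) (m - l)) := by
        rw [ENNReal.tsum_mul_left, ENNReal.tsum_add]
    _ ≤ ENNReal.ofReal (2 ^ c) * invPowWeight c m *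
          (2 * ∑' n : ℤ, invPowWeight s n + 2 * ∑' n : ℤ, invPowWeight s n) := by
        subst hs
        gcongr
        · exact (tsum_invPowWeight_mul_sub_le (sub_nonneg.2 hca) (hc.trans hcb) m).trans_eq
            (by rw [sub_add_eq_add_sub])
        · exact (tsum_invPowWeight_mul_sub_le (hc.trans hca) (sub_nonneg.2 hcb) m).trans_eq
            (by rw [add_sub_assoc])
    _ = ENNReal.ofReal (2 ^ c) * invPowWeight c m * (4 * ∑' n : ℤ, invPowWeight s n) := by
        ring

lemma ofReal_rpow_mul_invPowWeight_mul_mul_le {s : ℝ} (hs : 0 ≤ s) {k x y z : ℤ} (hk : k ≠ 0)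
    (h : |k| ≤ |x| + |y| + |z|) :
    ENNReal.ofReal (|(k : ℝ)| ^ s) * (invPowWeight s x * invPowWeight s y * invPowWeight s z) ≤
      ENNReal.ofReal (3 ^ s) *
        (invPowWeight s y * invPowWeight s z + invPowWeight s x * invPowWeight s z +
          invPowWeight s x * invPowWeight s y) := by
  have absorb (u : ℤ) (hu : |k| ≤ 3 * |u|) :
      ENNReal.ofReal (|(k : ℝ)| ^ s) * invPowWeight s u ≤ ENNReal.ofReal (3 ^ s) :=
    calc ENNReal.ofReal (|(k : ℝ)| ^ s) * invPowWeight s u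
        ≤ ENNReal.ofReal (|(k : ℝ)| ^ s) * (ENNReal.ofReal (3 ^ s) * invPowWeight s k) := by
          gcongr
          exact invPowWeight_le_rpow_mul hs hk (by exact_mod_cast hu)
      _ = ENNReal.ofReal (3 ^ s) := by
          rw [mul_left_comm, ofReal_rpow_mul_invPowWeight s hk, mul_one]
  rcases (by omega : |k| ≤ 3 * |x| ∨ |k| ≤ 3 * |y| ∨ |k| ≤ 3 * |z|) with hx | hy | hz
  · calc _ = ENNReal.ofReal (|(k : ℝ)| ^ s) * invPowWeight s x *
            (invPowWeight s y * invPowWeight s z) := by ring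
      _ ≤ ENNReal.ofReal (3 ^ s) * (invPowWeight s y * invPowWeight s z) := by
          gcongr; exact absorb x hx
      _ ≤ _ := by gcongr; exact le_self_add.trans le_self_add
  · calc _ = ENNReal.ofReal (|(k : ℝ)| ^ s) * invPowWeight s y *
            (invPowWeight s x * invPowWeight s z) := by ring
      _ ≤ ENNReal.ofReal (3 ^ s) * (invPowWeight s x * invPowWeight s z) := by
          gcongr; exact absorb y hy
      _ ≤ _ := by gcongr; exact le_add_self.trans le_self_add
  · calc _ = ENNReal.ofReal (|(k : ℝ)| ^ s) * invPowWeight s z *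
            (invPowWeight s x * invPowWeight s y) := by ring
      _ ≤ ENNReal.ofReal (3 ^ s) * (invPowWeight s x * invPowWeight s y) := by
          gcongr; exact absorb z hz
      _ ≤ _ := by gcongr; exact le_add_self

/-- The summand of the trilinear sum, with `p = (k₂, k₃)` and `k₁ = k₂ + k₃ - k`. -/
noncomputable def trilinearSummand (α ρ : ℝ) (k : ℤ) (p : ℤ × ℤ) : ℝ :=
  if (p.1 + p.2 - k) * p.1 * p.2 ≠ 0 ∧ p.1 ≠ k ∧ p.2 ≠ k then
    ((|(p.1 + p.2 - k) * p.1 * p.2| : ℤ) : ℝ) ^ (-(2 * α)) *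
      ((|k - p.1| : ℤ) : ℝ) ^ (-(2 * ρ)) *
      ((|k - p.2| : ℤ) : ℝ) ^ (-(2 * ρ))
  else 0

lemma trilinearSummand_nonneg (α ρ : ℝ) (k : ℤ) (p : ℤ × ℤ) : 0 ≤ trilinearSummand α ρ k p := by
  unfold trilinearSummand; split_ifs <;> positivity

lemma ofReal_trilinearSummand (α ρ : ℝ) (k : ℤ) (p : ℤ × ℤ) :
    ENNReal.ofReal (trilinearSummand α ρ k p) =
      invPowWeight (2 * α) (p.1 + p.2 - k) * invPowWeight (2 * α) p.1 *
        invPowWeight (2 * α) p.2 *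
        (invPowWeight (2 * ρ) (k - p.1) * invPowWeight (2 * ρ) (k - p.2)) := by
  obtain ⟨a, b⟩ := p
  unfold trilinearSummand
  split_ifs with h
  · obtain ⟨hprod, ha, hb⟩ := h
    simp only [ne_eq, mul_eq_zero, not_or] at hprod
    obtain ⟨⟨hx, ha0⟩, hb0⟩ := hprod
    rw [invPowWeight_of_ne_zero _ hx, invPowWeight_of_ne_zero _ ha0, invPowWeight_of_ne_zero _ hb0,
      invPowWeight_of_ne_zero _ (sub_ne_zero.2 (Ne.symm ha)),
      invPowWeight_of_ne_zero _ (sub_ne_zero.2 (Ne.symm hb)),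
      ← ENNReal.ofReal_mul (by positivity), ← ENNReal.ofReal_mul (by positivity),
      ← ENNReal.ofReal_mul (by positivity), ← ENNReal.ofReal_mul (by positivity)]
    push_cast
    rw [abs_mul, abs_mul, Real.mul_rpow (by positivity) (by positivity),
      Real.mul_rpow (by positivity) (by positivity)]
    congr 1
    ring
  · simp only [not_and_or, ne_eq, not_not, mul_eq_zero] at h
    rcases h with (⟨hx | ha⟩ | hb) | ha | hb <;> simp [*]

section Trilinear

variable {α ρ θ : ℝ} {k : ℤ}

lemma tsum_prod_invPowWeight_cross_le (hθ : 0 ≤ θ) (hθα : θ ≤ 2 * α) (hθρ : θ ≤ ρ)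
    (hk : k ≠ 0) :
    ∑' p : ℤ × ℤ, invPowWeight (2 * α) p.1 * invPowWeight (2 * ρ) (k - p.1) *
        (invPowWeight (2 * α) (p.1 + p.2 - k) * invPowWeight (2 * ρ) (k - p.2)) ≤
      ENNReal.ofReal (2 ^ θ) * ENNReal.ofReal (2 ^ (2 * θ)) * invPowWeight (2 * θ) k *
        (4 * ∑' n : ℤ, invPowWeight (2 * α + 2 * ρ - θ) n) ^ 2 := by
  set K := 4 * ∑' n : ℤ, invPowWeight (2 * α + 2 * ρ - θ) n
  have inner (a : ℤ) : ∑' b : ℤ, invPowWeight (2 * α) (a + b - k) * invPowWeight (2 * ρ) (k - b) =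
      ∑' l : ℤ, invPowWeight (2 * ρ) l * invPowWeight (2 * α) (a - l) := by
    rw [← (Equiv.subLeft k).tsum_eq]
    congr 1 with l
    rw [Equiv.subLeft_apply, sub_sub_cancel, show a + (k - l) - k = a - l by ring, mul_comm]
  have term (a : ℤ) : invPowWeight (2 * α) a * invPowWeight (2 * ρ) (k - a) *
      ∑' b : ℤ, invPowWeight (2 * α) (a + b - k) * invPowWeight (2 * ρ) (k - b) ≤
      ENNReal.ofReal (2 ^ θ) * K * (invPowWeight (2 * α + θ) a * invPowWeight (2 * ρ) (k - a)) := by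
    rcases eq_or_ne a 0 with rfl | ha
    · simp
    calc _ ≤ invPowWeight (2 * α) a * invPowWeight (2 * ρ) (k - a) *
            (ENNReal.ofReal (2 ^ θ) * invPowWeight θ a * K) := by
          rw [inner]
          gcongr
          exact tsum_invPowWeight_mul_sub_le_of_ne_zero hθ (by linarith) hθα (by ring) ha
      _ = _ := by rw [← invPowWeight_mul_invPowWeight]; ring
  calc _ = ∑' a : ℤ, invPowWeight (2 * α) a * invPowWeight (2 * ρ) (k - a) *
          ∑' b : ℤ, invPowWeight (2 * α) (a + b - k) * invPowWeight (2 * ρ) (k - b) := by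
        rw [ENNReal.tsum_prod']
        simp only [ENNReal.tsum_mul_left]
    _ ≤ ∑' a : ℤ, ENNReal.ofReal (2 ^ θ) * K *
          (invPowWeight (2 * α + θ) a * invPowWeight (2 * ρ) (k - a)) :=
        ENNReal.tsum_le_tsum term
    _ ≤ ENNReal.ofReal (2 ^ θ) * K *
          (ENNReal.ofReal (2 ^ (2 * θ)) * invPowWeight (2 * θ) k * K) := by
        rw [ENNReal.tsum_mul_left]
        gcongr
        exact tsum_invPowWeight_mul_sub_le_of_ne_zero (by linarith) (by linarith) (by linarith)
          (by ring) hk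
    _ = _ := by ring

lemma ofReal_rpow_mul_trilinearSummand_le (hα : 0 ≤ α) (hk : k ≠ 0) (p : ℤ × ℤ) :
    ENNReal.ofReal (|(k : ℝ)| ^ (2 * α)) * ENNReal.ofReal (trilinearSummand α ρ k p) ≤
      ENNReal.ofReal (3 ^ (2 * α)) *
        (invPowWeight (2 * α) p.1 * invPowWeight (2 * ρ) (k - p.1) *
            (invPowWeight (2 * α) p.2 * invPowWeight (2 * ρ) (k - p.2)) +
          invPowWeight (2 * α) p.2 * invPowWeight (2 * ρ) (k - p.2) *
            (invPowWeight (2 * α) (p.2 + p.1 - k) * invPowWeight (2 * ρ) (k - p.1)) +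
          invPowWeight (2 * α) p.1 * invPowWeight (2 * ρ) (k - p.1) *
            (invPowWeight (2 * α) (p.1 + p.2 - k) * invPowWeight (2 * ρ) (k - p.2))) := by
  obtain ⟨a, b⟩ := p
  have htri : |k| ≤ |a + b - k| + |a| + |b| := by
    have := abs_sub (a + b) (a + b - k)
    have := abs_add_le a b
    rw [sub_sub_cancel] at *
    omega
  calc _ = ENNReal.ofReal (|(k : ℝ)| ^ (2 * α)) *
          (invPowWeight (2 * α) (a + b - k) * invPowWeight (2 * α) a * invPowWeight (2 * α) b) *
          (invPowWeight (2 * ρ) (k - a) * invPowWeight (2 * ρ) (k - b)) := by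
        rw [ofReal_trilinearSummand]; ring
    _ ≤ ENNReal.ofReal (3 ^ (2 * α)) *
          (invPowWeight (2 * α) a * invPowWeight (2 * α) b +
            invPowWeight (2 * α) (a + b - k) * invPowWeight (2 * α) b +
            invPowWeight (2 * α) (a + b - k) * invPowWeight (2 * α) a) *
          (invPowWeight (2 * ρ) (k - a) * invPowWeight (2 * ρ) (k - b)) :=
        mul_le_mul_left (ofReal_rpow_mul_invPowWeight_mul_mul_le (by linarith) hk htri) _
    _ = _ := by rw [add_comm b a]; ring

lemma ofReal_rpow_mul_tsum_trilinearSummand_le (hθ : 0 ≤ θ) (hθα : θ ≤ 2 * α) (hθρ : θ ≤ ρ)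
    (hk : k ≠ 0) :
    ENNReal.ofReal (|(k : ℝ)| ^ (2 * α + 2 * θ)) *
        ∑' p : ℤ × ℤ, ENNReal.ofReal (trilinearSummand α ρ k p) ≤
      ENNReal.ofReal (3 ^ (2 * α)) * (ENNReal.ofReal (2 ^ θ) ^ 2 +
        2 * (ENNReal.ofReal (2 ^ θ) * ENNReal.ofReal (2 ^ (2 * θ)))) *
        (4 * ∑' n : ℤ, invPowWeight (2 * α + 2 * ρ - θ) n) ^ 2 := by
  set K := 4 * ∑' n : ℤ, invPowWeight (2 * α + 2 * ρ - θ) n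
  set leg : ℤ → ℝ≥0∞ := fun a => invPowWeight (2 * α) a * invPowWeight (2 * ρ) (k - a)
  set cross : ℤ × ℤ → ℝ≥0∞ := fun p => leg p.1 *
    (invPowWeight (2 * α) (p.1 + p.2 - k) * invPowWeight (2 * ρ) (k - p.2))
  have hk0 : 0 < |(k : ℝ)| := one_pos.trans_le (one_le_abs_intCast hk)
  have hleg : ∑' a, leg a ≤ ENNReal.ofReal (2 ^ θ) * invPowWeight θ k * K :=
    tsum_invPowWeight_mul_sub_le_of_ne_zero hθ hθα (by linarith) rfl hk
  have hlegs : ∑' p : ℤ × ℤ, leg p.1 * leg p.2 ≤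
      (ENNReal.ofReal (2 ^ θ) * invPowWeight θ k * K) ^ 2 := by
    rw [ENNReal.tsum_prod', sq]
    simp only [ENNReal.tsum_mul_left, ENNReal.tsum_mul_right]
    gcongr
  have hswap : ∑' p : ℤ × ℤ, cross p.swap = ∑' p, cross p := (Equiv.prodComm ℤ ℤ).tsum_eq cross
  set B := ENNReal.ofReal (2 ^ θ) * ENNReal.ofReal (2 ^ (2 * θ)) *
    invPowWeight (2 * θ) k * K ^ 2 with hB
  have hcross : ∑' p, cross p ≤ B := tsum_prod_invPowWeight_cross_le hθ hθα hθρ hk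
  have hsq : invPowWeight θ k ^ 2 = invPowWeight (2 * θ) k := by
    rw [sq, invPowWeight_mul_invPowWeight, two_mul]
  calc _ = ENNReal.ofReal (|(k : ℝ)| ^ (2 * θ)) * ∑' p : ℤ × ℤ,
          ENNReal.ofReal (|(k : ℝ)| ^ (2 * α)) * ENNReal.ofReal (trilinearSummand α ρ k p) := by
        rw [Real.rpow_add hk0, ENNReal.ofReal_mul (by positivity), ENNReal.tsum_mul_left]
        ring
    _ ≤ ENNReal.ofReal (|(k : ℝ)| ^ (2 * θ)) * ∑' p : ℤ × ℤ,
          ENNReal.ofReal (3 ^ (2 * α)) * (leg p.1 * leg p.2 + cross p.swap + cross p) := by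
        refine mul_le_mul_right (ENNReal.tsum_le_tsum fun p => ?_) _
        exact ofReal_rpow_mul_trilinearSummand_le (by linarith) hk p
    _ = ENNReal.ofReal (|(k : ℝ)| ^ (2 * θ)) * ENNReal.ofReal (3 ^ (2 * α)) *
          (∑' p : ℤ × ℤ, leg p.1 * leg p.2 + ∑' p : ℤ × ℤ, cross p.swap + ∑' p, cross p) := by
        rw [ENNReal.tsum_mul_left, ENNReal.tsum_add, ENNReal.tsum_add, mul_assoc]
    _ ≤ ENNReal.ofReal (|(k : ℝ)| ^ (2 * θ)) * ENNReal.ofReal (3 ^ (2 * α)) *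
          ((ENNReal.ofReal (2 ^ θ) * invPowWeight θ k * K) ^ 2 + B + B) := by
        rw [hswap]
        exact mul_le_mul_right (add_le_add (add_le_add hlegs hcross) hcross) _
    _ = ENNReal.ofReal (|(k : ℝ)| ^ (2 * θ)) * invPowWeight (2 * θ) k *
          (ENNReal.ofReal (3 ^ (2 * α)) * (ENNReal.ofReal (2 ^ θ) ^ 2 +
            2 * (ENNReal.ofReal (2 ^ θ) * ENNReal.ofReal (2 ^ (2 * θ)))) * K ^ 2) := by
        rw [hB, ← hsq]
        ring
    _ = _ := by rw [ofReal_rpow_mul_invPowWeight _ hk, one_mul]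

end Trilinear

lemma summable_and_mul_tsum_le_of_ofReal_mul_tsum_le {ι : Type*} {f : ι → ℝ}
    (hf : ∀ i, 0 ≤ f i) {c : ℝ} (hc : 0 < c) {M : ℝ≥0∞} (hM : M ≠ ⊤)
    (h : ENNReal.ofReal c * ∑' i, ENNReal.ofReal (f i) ≤ M) :
    Summable f ∧ c * ∑' i, f i ≤ M.toReal := by
  have hfin : ∑' i, ENNReal.ofReal (f i) ≠ ⊤ := by
    intro htop
    rw [htop, ENNReal.mul_top (ENNReal.ofReal_pos.2 hc).ne'] at h
    exact hM (top_le_iff.1 h)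
  have hto (i : ι) : (ENNReal.ofReal (f i)).toReal = f i := ENNReal.toReal_ofReal (hf i)
  refine ⟨by simpa only [hto] using ENNReal.summable_toReal hfin, ?_⟩
  calc c * ∑' i, f i = (ENNReal.ofReal c * ∑' i, ENNReal.ofReal (f i)).toReal := by
        rw [ENNReal.toReal_mul, ENNReal.toReal_ofReal hc.le,
          ENNReal.tsum_toReal_eq fun _ => ENNReal.ofReal_ne_top]
        simp only [hto]
    _ ≤ M.toReal := ENNReal.toReal_mono hM h

/-- trilinear estimate for the modulated derivative NLS: for
`θ > 0`, `ρ > max(1/2, θ)` and `α ≥ θ/2`, the quantity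
`I = sup_{k ≠ 0} |k|^{2α+2θ} Σ_{-k₁+k₂+k₃=k, k₂≠k, k₃≠k, k₁k₂k₃≠0}
|k₁k₂k₃|^{-2α} |k-k₂|^{-2ρ} |k-k₃|^{-2ρ}` is finite (the sums converge and
are uniformly bounded). -/
theorem stmt_12 (θ α ρ : ℝ) (hθ : 0 < θ) (hρ : max (1/2) θ < ρ)
    (hα : θ/2 ≤ α) :
    ∃ C : ℝ, ∀ k : ℤ, k ≠ 0 →
      Summable (fun p : ℤ × ℤ =>
        if (p.1 + p.2 - k) * p.1 * p.2 ≠ 0 ∧ p.1 ≠ k ∧ p.2 ≠ k then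
          ((|(p.1 + p.2 - k) * p.1 * p.2| : ℤ) : ℝ) ^ (-(2 * α)) *
            ((|k - p.1| : ℤ) : ℝ) ^ (-(2 * ρ)) *
            ((|k - p.2| : ℤ) : ℝ) ^ (-(2 * ρ))
        else 0) ∧
      ((|k| : ℤ) : ℝ) ^ (2 * α + 2 * θ) *
        (∑' p : ℤ × ℤ,
          if (p.1 + p.2 - k) * p.1 * p.2 ≠ 0 ∧ p.1 ≠ k ∧ p.2 ≠ k then
            ((|(p.1 + p.2 - k) * p.1 * p.2| : ℤ) : ℝ) ^ (-(2 * α)) *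
              ((|k - p.1| : ℤ) : ℝ) ^ (-(2 * ρ)) *
              ((|k - p.2| : ℤ) : ℝ) ^ (-(2 * ρ))
          else 0) ≤ C := by
  obtain ⟨hρ_half, hθρ⟩ := max_lt_iff.1 hρ
  set M : ℝ≥0∞ := ENNReal.ofReal (3 ^ (2 * α)) * (ENNReal.ofReal (2 ^ θ) ^ 2 +
    2 * (ENNReal.ofReal (2 ^ θ) * ENNReal.ofReal (2 ^ (2 * θ)))) *
    (4 * ∑' n : ℤ, invPowWeight (2 * α + 2 * ρ - θ) n) ^ 2
  have hM : M ≠ ⊤ := by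
    have := tsum_invPowWeight_ne_top (s := 2 * α + 2 * ρ - θ) (by linarith)
    simp [M, ENNReal.mul_eq_top, ENNReal.add_eq_top, this]
  refine ⟨M.toReal, fun k hk => ?_⟩
  have hk0 : 0 < |(k : ℝ)| := one_pos.trans_le (one_le_abs_intCast hk)
  rw [Int.cast_abs]
  exact summable_and_mul_tsum_le_of_ofReal_mul_tsum_le (trilinearSummand_nonneg α ρ k)
    (Real.rpow_pos_of_pos hk0 _) hM
    (ofReal_rpow_mul_tsum_trilinearSummand_le hθ.le (by linarith) hθρ.le hk)
end

section
/- 2D convolution integral bound J₂: for α>1/2 and ρ>1/2, sup_{ξ∈ℝ²} ∫_{ℝ²}∫_{ℝ²} (1+2|⟨ξ₁−ξ₂, ξ−ξ₂⟩|)^{−2ρ} (1+|ξ₂|²)^{−α} (1+|ξ₁|²)^{−α} dξ₁ dξ₂ < ∞. -/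
/-!
Integrate in `ξ₁` first. With `q = ξ - ξ₂ ≠ 0`, rotate coordinates so that `q` points along the
first axis: the factor `(1 + 2|⟨ξ₁ - ξ₂, q⟩|)^(-2ρ)` then only depends on the first coordinate,
which it confines to a strip of width `≈ 1/|q|`, while `(1 + |ξ₁|²)^(-α)` is bounded by a function
of the second coordinate alone, integrable on `ℝ` because `2α > 1`. So the inner integral is
`≲ |ξ - ξ₂|⁻¹`, and it remains to bound `∫ (1 + |ξ₂|²)^(-α) |ξ - ξ₂|⁻¹ dξ₂` uniformly in `ξ`:
near `ξ₂ = ξ` the kernel `|·|⁻¹` is integrable in the plane, and away from it Hölder's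
inequality applies with `q = 2α + 1 > 2` and `p` its conjugate exponent: the kernel lies in `L^q`
there, and the weight lies in `Lᵖ` since `2αp = 2α + 1 > 2`.
-/

open MeasureTheory Set Metric
open scoped ENNReal

local notation "E2" => EuclideanSpace ℝ (Fin 2)

section DecayIntegrals

variable {E : Type*} [NormedAddCommGroup E] [NormedSpace ℝ E] [FiniteDimensional ℝ E]
  [MeasurableSpace E] [BorelSpace E] {μ : Measure E} [μ.IsAddHaarMeasure]

theorem lintegral_one_add_norm_rpow_neg_lt_top {r : ℝ} (hr : (Module.finrank ℝ E : ℝ) < r) :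
    ∫⁻ x, ENNReal.ofReal ((1 + ‖x‖) ^ (-r)) ∂μ < ⊤ :=
  (integrable_one_add_norm hr).lintegral_lt_top

theorem lintegral_one_add_norm_sq_rpow_neg_lt_top {s : ℝ}
    (hs : (Module.finrank ℝ E : ℝ) < 2 * s) :
    ∫⁻ x, ENNReal.ofReal ((1 + ‖x‖ ^ 2) ^ (-s)) ∂μ < ⊤ := by
  simpa [neg_div, mul_div_cancel_left₀] using
    (integrable_rpow_neg_one_add_norm_sq (μ := μ) hs).lintegral_lt_top

theorem setLIntegral_ball_inv_norm_lt_top (hd : 1 < Module.finrank ℝ E) (r : ℝ) :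
    ∫⁻ x in ball 0 r, ENNReal.ofReal ‖x‖⁻¹ ∂μ < ⊤ := by
  refine IntegrableOn.setLIntegral_lt_top ?_
  refine integrableOn_ball_of_norm_le_rpow (C := 1) (α := 1) hd.le (by exact_mod_cast hd)
    (Filter.Eventually.of_forall fun x => ?_) (by fun_prop)
  simp [Real.rpow_neg_one]

theorem setLIntegral_compl_ball_inv_norm_rpow_lt_top {q : ℝ}
    (hq : (Module.finrank ℝ E : ℝ) < q) :
    ∫⁻ x in (ball 0 1)ᶜ, ENNReal.ofReal ‖x‖⁻¹ ^ q ∂μ < ⊤ := by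
  have hq0 : 0 < q := lt_of_le_of_lt (Nat.cast_nonneg _) hq
  refine lt_of_le_of_lt ?_ (ENNReal.mul_lt_top (ENNReal.ofReal_lt_top (r := 2 ^ q))
    (lintegral_one_add_norm_rpow_neg_lt_top (μ := μ) hq))
  rw [← lintegral_const_mul' _ _ ENNReal.ofReal_ne_top]
  refine (setLIntegral_mono' measurableSet_ball.compl fun x hx => ?_).trans
    (setLIntegral_le_lintegral _ _)
  have hx : 1 ≤ ‖x‖ := by simpa using hx
  rw [ENNReal.ofReal_rpow_of_nonneg (by positivity) hq0.le, ← ENNReal.ofReal_mul (by positivity)]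
  refine ENNReal.ofReal_le_ofReal ?_
  calc ‖x‖⁻¹ ^ q = 2 ^ q * (2 * ‖x‖) ^ (-q) := by
        rw [Real.mul_rpow zero_le_two (by positivity), ← mul_assoc, ← Real.rpow_add two_pos,
          add_neg_cancel, Real.rpow_zero, one_mul, Real.inv_rpow (by positivity),
          Real.rpow_neg (by positivity)]
    _ ≤ 2 ^ q * (1 + ‖x‖) ^ (-q) := by
        gcongr _ * ?_
        exact Real.rpow_le_rpow_of_nonpos (by positivity) (by linarith) (by linarith)

end DecayIntegrals

theorem lintegral_mul_comp_sub_le {G : Type*} [AddGroup G] [MeasurableSpace G]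
    [MeasurableAdd G] [MeasurableNeg G] {μ : Measure G} [μ.IsAddLeftInvariant] [μ.IsNegInvariant]
    {w k : G → ℝ≥0∞} (hw : Measurable w) (hk : Measurable k) (hw1 : ∀ y, w y ≤ 1)
    {s : Set G} (hs : MeasurableSet s) {p q : ℝ} (hpq : p.HolderConjugate q) (ξ : G) :
    ∫⁻ y, w y * k (ξ - y) ∂μ ≤
      ∫⁻ z in s, k z ∂μ + (∫⁻ y, w y ^ p ∂μ) ^ (1 / p) * (∫⁻ z in sᶜ, k z ^ q ∂μ) ^ (1 / q) := by
  have hsub : Measurable fun y : G => ξ - y := measurable_const_sub ξ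
  have hpow : (fun z => sᶜ.indicator k z ^ q) = sᶜ.indicator fun z => k z ^ q := by
    ext z; by_cases hz : z ∈ sᶜ <;> simp [hz, ENNReal.zero_rpow_of_pos hpq.symm.pos]
  calc ∫⁻ y, w y * k (ξ - y) ∂μ
      = ∫⁻ y, w y * s.indicator k (ξ - y) ∂μ +
          ∫⁻ y, (w * fun y => sᶜ.indicator k (ξ - y)) y ∂μ := by
        simp_rw [← indicator_self_add_compl_apply s k, mul_add]
        exact lintegral_add_left (hw.mul ((hk.indicator hs).comp hsub)) _
    _ ≤ ∫⁻ y, s.indicator k (ξ - y) ∂μ +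
          (∫⁻ y, w y ^ p ∂μ) ^ (1 / p) * (∫⁻ y, sᶜ.indicator k (ξ - y) ^ q ∂μ) ^ (1 / q) :=
        add_le_add (lintegral_mono fun y => mul_le_of_le_one_left' (hw1 y))
          (ENNReal.lintegral_mul_le_Lp_mul_Lq μ hpq hw.aemeasurable
            ((hk.indicator hs.compl).comp hsub).aemeasurable)
    _ = _ := by
        rw [lintegral_sub_left_eq_self (s.indicator k),
          lintegral_sub_left_eq_self fun z => sᶜ.indicator k z ^ q, hpow,
          lintegral_indicator hs, lintegral_indicator hs.compl]

theorem Real.lintegral_comp_mul_left (f : ℝ → ℝ≥0∞) {c : ℝ} (hc : c ≠ 0) :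
    ∫⁻ t, f (c * t) = ENNReal.ofReal |c⁻¹| * ∫⁻ t, f t := by
  calc ∫⁻ t, f (c * t) = ∫⁻ t, f t ∂(Measure.map (c * ·) volume) :=
        (lintegral_map_equiv f (Homeomorph.mulLeft₀ c hc).toMeasurableEquiv).symm
    _ = ENNReal.ofReal |c⁻¹| * ∫⁻ t, f t := by
        rw [Real.map_volume_mul_left hc, lintegral_smul_measure, smul_eq_mul]

theorem EuclideanSpace.exists_linearIsometryEquiv_inner_eq (q : E2) :
    ∃ T : E2 ≃ₗᵢ[ℝ] E2, ∀ η, inner ℝ (T η) q = ‖q‖ * η 0 := by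
  set v : E2 := ‖q‖ • EuclideanSpace.single 0 1
  have hv : ‖v‖ = ‖q‖ := by simp [v, norm_smul]
  set T := Submodule.reflection (ℝ ∙ (v - q))ᗮ
  refine ⟨T, fun η => ?_⟩
  calc inner ℝ (T η) q = inner ℝ (T η) (T v) := by rw [Submodule.reflection_sub hv]
    _ = inner ℝ η v := T.inner_map_map η v
    _ = ‖q‖ * η 0 := by simp [v, real_inner_smul_right, EuclideanSpace.inner_single_right]

theorem EuclideanSpace.lintegral_fin_two_mul {F G : ℝ → ℝ≥0∞} (hF : Measurable F)
    (hG : Measurable G) :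
    ∫⁻ η : E2, F (η 0) * G (η 1) = (∫⁻ t, F t) * ∫⁻ s, G s := by
  have e := (volume_preserving_finTwoArrow ℝ).comp (PiLp.volume_preserving_ofLp (Fin 2))
  rw [← lintegral_prod_mul hF.aemeasurable hG.aemeasurable, ← Measure.volume_eq_prod,
    ← e.lintegral_comp (f := fun z : ℝ × ℝ => F z.1 * G z.2) (by fun_prop)]
  rfl

theorem EuclideanSpace.lintegral_comp_inner_mul_norm_le {F G : ℝ → ℝ≥0∞} (hF : Measurable F)
    (hG : Measurable G) (hG_anti : AntitoneOn G (Ici 0)) {q : E2} (hq : q ≠ 0) :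
    ∫⁻ x : E2, F (inner ℝ x q) * G ‖x‖ ≤
      ENNReal.ofReal ‖q‖⁻¹ * ((∫⁻ t, F t) * ∫⁻ s, G |s|) := by
  obtain ⟨T, hT⟩ := EuclideanSpace.exists_linearIsometryEquiv_inner_eq q
  calc ∫⁻ x, F (inner ℝ x q) * G ‖x‖
      = ∫⁻ η, F (inner ℝ (T η) q) * G ‖T η‖ :=
        (T.measurePreserving.lintegral_comp_emb T.toMeasurableEquiv.measurableEmbedding _).symm
    _ ≤ ∫⁻ η : E2, F (‖q‖ * η 0) * G |η 1| := by
        refine lintegral_mono fun η => ?_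
        rw [hT, T.norm_map]
        gcongr
        exact hG_anti (mem_Ici.2 (abs_nonneg _)) (mem_Ici.2 (norm_nonneg _))
          (PiLp.norm_apply_le η 1)
    _ = ENNReal.ofReal ‖q‖⁻¹ * ((∫⁻ t, F t) * ∫⁻ s, G |s|) := by
        rw [EuclideanSpace.lintegral_fin_two_mul (F := fun t => F (‖q‖ * t))
          (G := fun s => G |s|) (by fun_prop) (by fun_prop),
          Real.lintegral_comp_mul_left F (norm_ne_zero_iff.mpr hq),
          abs_of_nonneg (inv_nonneg.mpr (norm_nonneg q)), mul_assoc]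

theorem lintegral_one_add_two_mul_abs_rpow_neg_lt_top {ρ : ℝ} (hρ : 1 / 2 < ρ) :
    ∫⁻ t : ℝ, ENNReal.ofReal ((1 + 2 * |t|) ^ (-(2 * ρ))) < ⊤ := by
  refine lt_of_le_of_lt (lintegral_mono fun t => ENNReal.ofReal_le_ofReal ?_)
    (lintegral_one_add_norm_rpow_neg_lt_top (μ := volume) (r := 2 * ρ) (by simp; linarith))
  exact Real.rpow_le_rpow_of_nonpos (by positivity) (by simp; linarith [abs_nonneg t])
    (by linarith)

theorem lintegral_one_add_sq_rpow_neg_lt_top {α : ℝ} (hα : 1 / 2 < α) :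
    ∫⁻ s : ℝ, ENNReal.ofReal ((1 + s ^ 2) ^ (-α)) < ⊤ := by
  simpa using lintegral_one_add_norm_sq_rpow_neg_lt_top (μ := volume) (E := ℝ) (s := α)
    (by simp; linarith)

theorem lintegral_one_add_two_mul_abs_inner_rpow_mul_le (ρ : ℝ) {α : ℝ} (hα : 0 ≤ α)
    {ξ ξ₂ : E2} (hne : ξ₂ ≠ ξ) :
    ∫⁻ ξ₁ : E2, ENNReal.ofReal ((1 + 2 * |inner ℝ (ξ₁ - ξ₂) (ξ - ξ₂)|) ^ (-(2 * ρ)) *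
        (1 + ‖ξ₁‖ ^ 2) ^ (-α)) ≤
      ENNReal.ofReal ‖ξ - ξ₂‖⁻¹ * ((∫⁻ t : ℝ, ENNReal.ofReal ((1 + 2 * |t|) ^ (-(2 * ρ)))) *
        ∫⁻ s : ℝ, ENNReal.ofReal ((1 + s ^ 2) ^ (-α))) := by
  set a := inner ℝ ξ₂ (ξ - ξ₂)
  have hG : AntitoneOn (fun r : ℝ => ENNReal.ofReal ((1 + r ^ 2) ^ (-α))) (Ici 0) :=
    fun r hr s _ hrs => ENNReal.ofReal_le_ofReal <|
      Real.rpow_le_rpow_of_nonpos (by positivity) (by gcongr) (by linarith)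
  have key := EuclideanSpace.lintegral_comp_inner_mul_norm_le
    (F := fun t => ENNReal.ofReal ((1 + 2 * |t - a|) ^ (-(2 * ρ))))
    (by fun_prop) (by fun_prop) hG (sub_ne_zero.2 hne.symm)
  simp only [sq_abs,
    lintegral_sub_right_eq_self fun t => ENNReal.ofReal ((1 + 2 * |t|) ^ (-(2 * ρ)))] at key
  refine le_of_eq_of_le (lintegral_congr fun ξ₁ => ?_) key
  rw [inner_sub_left, ENNReal.ofReal_mul (by positivity)]

theorem exists_lintegral_one_add_norm_sq_rpow_mul_inv_norm_sub_le {α : ℝ} (hα : 1 / 2 < α) :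
    ∃ C : ℝ≥0∞, C < ⊤ ∧ ∀ ξ : E2,
      ∫⁻ y, ENNReal.ofReal ((1 + ‖y‖ ^ 2) ^ (-α)) * ENNReal.ofReal ‖ξ - y‖⁻¹ ≤ C := by
  set q := 2 * α + 1
  set p := q.conjExponent
  have hpq : p.HolderConjugate q := (Real.HolderConjugate.conjExponent (by linarith)).symm
  have hαp : α * p = α + 1 / 2 := by
    simp only [p, q, Real.conjExponent]; field_simp; ring
  have hw : ∫⁻ y : E2, ENNReal.ofReal ((1 + ‖y‖ ^ 2) ^ (-α)) ^ p < ⊤ := by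
    refine lt_of_le_of_lt (le_of_eq (lintegral_congr fun y => ?_))
      (lintegral_one_add_norm_sq_rpow_neg_lt_top (μ := volume) (s := α * p) (by simp; linarith))
    rw [ENNReal.ofReal_rpow_of_nonneg (by positivity) hpq.nonneg, ← Real.rpow_mul (by positivity),
      neg_mul]
  have hk : ∫⁻ z in (ball (0 : E2) 1)ᶜ, ENNReal.ofReal ‖z‖⁻¹ ^ q < ⊤ :=
    setLIntegral_compl_ball_inv_norm_rpow_lt_top (by simp; linarith)
  refine ⟨_, ENNReal.add_lt_top.2 ⟨setLIntegral_ball_inv_norm_lt_top (by simp) 1,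
    ENNReal.mul_lt_top (ENNReal.rpow_lt_top_of_nonneg (by simp [hpq.nonneg]) hw.ne)
      (ENNReal.rpow_lt_top_of_nonneg (by simp [hpq.symm.nonneg]) hk.ne)⟩,
    fun ξ => lintegral_mul_comp_sub_le (by fun_prop) (by fun_prop) (fun y => ?_)
      measurableSet_ball hpq ξ⟩
  exact ENNReal.ofReal_le_one.2 <|
    Real.rpow_le_one_of_one_le_of_nonpos (by nlinarith [sq_nonneg ‖y‖]) (by linarith)

/-- 2D convolution integral bound `J₂`: for `α > 1/2` and
`ρ > 1/2`,
`sup_ξ ∫∫ (1+2|⟨ξ₁-ξ₂, ξ-ξ₂⟩|)^{-2ρ} (1+|ξ₂|²)^{-α} (1+|ξ₁|²)^{-α} dξ₁ dξ₂`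
is finite. -/
theorem stmt_14 (α ρ : ℝ) (hα : 1/2 < α) (hρ : 1/2 < ρ) :
    ∃ C : ℝ≥0∞, C < ⊤ ∧ ∀ ξ : EuclideanSpace ℝ (Fin 2),
      (∫⁻ p : EuclideanSpace ℝ (Fin 2) × EuclideanSpace ℝ (Fin 2),
        ENNReal.ofReal ((1 + 2 * |(inner ℝ (p.1 - p.2) (ξ - p.2) : ℝ)|) ^ (-(2 * ρ)) *
          (1 + ‖p.2‖ ^ 2) ^ (-α) * (1 + ‖p.1‖ ^ 2) ^ (-α))) ≤ C := by
  obtain ⟨C, hC, hconv⟩ := exists_lintegral_one_add_norm_sq_rpow_mul_inv_norm_sub_le hα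
  set K := (∫⁻ t : ℝ, ENNReal.ofReal ((1 + 2 * |t|) ^ (-(2 * ρ)))) *
    ∫⁻ s : ℝ, ENNReal.ofReal ((1 + s ^ 2) ^ (-α))
  have hK : K < ⊤ := ENNReal.mul_lt_top (lintegral_one_add_two_mul_abs_rpow_neg_lt_top hρ)
    (lintegral_one_add_sq_rpow_neg_lt_top hα)
  refine ⟨C * K, ENNReal.mul_lt_top hC hK, fun ξ => ?_⟩
  have hinner : ∀ᵐ ξ₂ : E2, ∫⁻ ξ₁ : E2,
      ENNReal.ofReal ((1 + 2 * |inner ℝ (ξ₁ - ξ₂) (ξ - ξ₂)|) ^ (-(2 * ρ)) *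
        (1 + ‖ξ₂‖ ^ 2) ^ (-α) * (1 + ‖ξ₁‖ ^ 2) ^ (-α)) ≤
      ENNReal.ofReal ((1 + ‖ξ₂‖ ^ 2) ^ (-α)) * ENNReal.ofReal ‖ξ - ξ₂‖⁻¹ * K := by
    filter_upwards [Measure.ae_ne volume ξ] with ξ₂ hξ₂
    simp_rw [mul_right_comm _ ((1 + ‖ξ₂‖ ^ 2) ^ (-α)), ENNReal.ofReal_mul' (by positivity :
      (0 : ℝ) ≤ (1 + ‖ξ₂‖ ^ 2) ^ (-α))]
    rw [lintegral_mul_const' _ _ ENNReal.ofReal_ne_top, mul_comm, mul_assoc]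
    exact mul_le_mul_right (lintegral_one_add_two_mul_abs_inner_rpow_mul_le ρ (by linarith) hξ₂) _
  calc _ = ∫⁻ ξ₂ : E2, ∫⁻ ξ₁ : E2,
        ENNReal.ofReal ((1 + 2 * |inner ℝ (ξ₁ - ξ₂) (ξ - ξ₂)|) ^ (-(2 * ρ)) *
          (1 + ‖ξ₂‖ ^ 2) ^ (-α) * (1 + ‖ξ₁‖ ^ 2) ^ (-α)) := by
        rw [Measure.volume_eq_prod, lintegral_prod_symm _ (by fun_prop)]
    _ ≤ ∫⁻ ξ₂ : E2, ENNReal.ofReal ((1 + ‖ξ₂‖ ^ 2) ^ (-α)) * ENNReal.ofReal ‖ξ - ξ₂‖⁻¹ * K :=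
        lintegral_mono_ae hinner
    _ ≤ C * K := by
        rw [lintegral_mul_const' _ _ hK.ne]
        exact mul_le_mul_left (hconv ξ) K
end
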